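/- For all integers k ≥ 0, ∑_{j=0}^{k} C(k,j) · (∑_{r=0}^{j} S(j+1,r+1) I_r) = ∑_{r=0}^{k+1} S(k+1,r) I_r, i.e., the binomial transform of the sequence a_{j+1/2} = ∑_r S(j+1,r+1) I_r is the sequence a_{k+1} = ∑_r S(k+1,r) I_r. -/
import Mathlib


open Finset

def stirling : ℕ → ℕ → ℕ
  | 0, 0 => 1
  | 0, _ + 1 => 0
  | _ + 1, 0 => 0
  | n + 1, j + 1 => (j + 1) * stirling n (j + 1) + stirling n j

/-- Number of involutions in the symmetric group on `j` letters. -/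
noncomputable def involutions (j : ℕ) : ℕ := Nat.card {σ : Equiv.Perm (Fin j) // σ * σ = 1}

open Equiv

lemma stirling_succ (n j : ℕ) :
    stirling (n+1) (j+1) = (j + 1) * stirling n (j + 1) + stirling n j := rfl

lemma stirling_zero (n : ℕ) : stirling (n+1) 0 = 0 := rfl

lemma stirling_eq_zero : ∀ n k, n < k → stirling n k = 0
  | 0, 0, h => absurd h (by omega)
  | 0, _+1, _ => rfl
  | n+1, 0, h => absurd h (by omega)
  | n+1, k+1, h => by
    rw [stirling_succ, stirling_eq_zero n (k+1) (by omega), stirling_eq_zero n k (by omega)]; rfl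

lemma stirling_one : ∀ n, stirling (n+1) 1 = 1
  | 0 => rfl
  | n+1 => by rw [stirling_succ, stirling_one n]; rfl

lemma stirling_binom (k s : ℕ) :
    stirling (k+1) (s+1) = ∑ j ∈ Finset.range (k+1), k.choose j * stirling j s := by
  induction k generalizing s with
  | zero => simp [stirling]
  | succ k ih =>
    have key : ∀ t, (∑ j ∈ Finset.range (k+1), k.choose (j+1) * stirling (j+1) t)
        + 1 * stirling 0 t = stirling (k+1) (t+1) := by
      intro t
      rw [ih t, Finset.sum_range_succ' (fun j => k.choose j * stirling j t) k]
      rw [Finset.sum_range_succ (fun j => k.choose (j+1) * stirling (j+1) t) k]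
      simp [Nat.choose_succ_self]
    rw [Finset.sum_range_succ' (fun j => (k+1).choose j * stirling j s)]
    simp only [Nat.choose_succ_succ, add_mul, Finset.sum_add_distrib, Nat.choose_zero_right]
    cases s with
    | zero =>
      simp [stirling_zero, stirling_one, show stirling 0 0 = 1 from rfl]
    | succ t =>
      have hB : ∑ j ∈ Finset.range (k+1), k.choose j * stirling (j+1) (t+1)
          = (t+1) * stirling (k+1) (t+1+1) + stirling (k+1) (t+1) := by
        have h0 : ∀ j ∈ Finset.range (k+1), k.choose j * stirling (j+1) (t+1)
            = (t+1) * (k.choose j * stirling j (t+1)) + k.choose j * stirling j t := by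
          intro j _; rw [stirling_succ]; ring
        rw [Finset.sum_congr rfl h0, Finset.sum_add_distrib, ← Finset.mul_sum, ← ih, ← ih]
      rw [hB, stirling_succ, ← key (t+1)]
      ring

lemma involutions_zero : involutions 0 = 1 := by
  rw [involutions, Nat.card_eq_fintype_card]
  rw [Fintype.card_eq_one_iff]
  exact ⟨⟨1, by simp⟩, fun b => Subtype.ext (Subsingleton.elim _ _)⟩

lemma involutions_one : involutions 1 = 1 := by
  rw [involutions, Nat.card_eq_fintype_card]
  rw [Fintype.card_eq_one_iff]
  exact ⟨⟨1, by simp⟩, fun b => Subtype.ext (Subsingleton.elim _ _)⟩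

lemma char0 {n : ℕ} (e : Perm (Fin n)) :
    Perm.decomposeFin.symm (0, e) * Perm.decomposeFin.symm (0, e) = 1 ↔ e * e = 1 := by
  set σ := Perm.decomposeFin.symm (0, e) with hσ
  have happ : ∀ x : Fin n, σ x.succ = (e x).succ := by
    intro x; rw [hσ, Perm.decomposeFin_symm_apply_succ]; simp
  have h0 : σ 0 = 0 := Perm.decomposeFin_symm_apply_zero 0 e
  constructor
  · intro h
    ext x
    have h2 := Equiv.ext_iff.1 h x.succ
    simp only [Perm.mul_apply, happ, Perm.one_apply, Fin.succ_inj] at h2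
    simp [Perm.mul_apply, h2]
  · intro h
    ext y
    refine Fin.cases ?_ ?_ y
    · simp [Perm.mul_apply, h0]
    · intro x
      have := Equiv.ext_iff.1 h x
      simp only [Perm.mul_apply] at this ⊢
      rw [happ, happ, this]
      simp

lemma charS {n : ℕ} (q : Fin (n+1)) (e : Perm (Fin (n+1))) :
    Perm.decomposeFin.symm (q.succ, e) * Perm.decomposeFin.symm (q.succ, e) = 1 ↔
      (e * e = 1 ∧ e q = q) := by
  set σ := Perm.decomposeFin.symm (q.succ, e) with hσ
  have happ : ∀ x : Fin (n+1), σ x.succ = swap 0 q.succ (e x).succ := by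
    intro x; rw [hσ, Perm.decomposeFin_symm_apply_succ]
  have h0 : σ 0 = q.succ := Perm.decomposeFin_symm_apply_zero q.succ e
  have hne : ∀ x : Fin (n+1), e x ≠ q → σ x.succ = (e x).succ := by
    intro x hx
    rw [happ, swap_apply_of_ne_of_ne (Fin.succ_ne_zero _) (by simpa [Fin.succ_inj] using hx)]
  have heq : ∀ x : Fin (n+1), e x = q → σ x.succ = 0 := by
    intro x hx; rw [happ, hx, swap_apply_right]
  constructor
  · intro h
    have hq : e q = q := by
      have h2 := Equiv.ext_iff.1 h 0
      simp only [Perm.mul_apply, h0, Perm.one_apply] at h2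
      by_contra hx
      rw [hne q hx] at h2
      exact Fin.succ_ne_zero _ h2
    refine ⟨?_, hq⟩
    ext x
    have h2 := Equiv.ext_iff.1 h x.succ
    simp only [Perm.mul_apply, Perm.one_apply] at h2
    by_cases hx : e x = q
    · have hxq : x = q := e.injective (by rw [hx, hq])
      simp [Perm.mul_apply, hx, hxq, hq]
    · rw [hne x hx] at h2
      by_cases hy : e (e x) = q
      · rw [heq _ hy] at h2
        exact absurd h2.symm (Fin.succ_ne_zero _)
      · rw [hne _ hy] at h2
        have : e (e x) = x := Fin.succ_injective _ h2
        simp [Perm.mul_apply, this]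
  · rintro ⟨h, hq⟩
    ext y
    refine Fin.cases ?_ ?_ y
    · simp only [Perm.mul_apply, h0, Perm.one_apply]
      rw [heq q hq]
    · intro x
      simp only [Perm.mul_apply, Perm.one_apply]
      by_cases hx : e x = q
      · have hxq : x = q := e.injective (by rw [hx, hq])
        rw [heq x hx, h0, hxq]
      · rw [hne x hx]
        have h2 : e (e x) = x := by
          have := Equiv.ext_iff.1 h x; simpa [Perm.mul_apply] using this
        have hxne : x ≠ q := fun hc => hx (by rw [hc, hq])
        rw [hne (e x) (by rw [h2]; exact hxne), h2]

lemma decomposeFin_fst {n : ℕ} (σ : Perm (Fin (n+1))) : (Perm.decomposeFin σ).1 = σ 0 := by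
  rcases hp : Perm.decomposeFin σ with ⟨p, f⟩
  have h : σ = Perm.decomposeFin.symm (p, f) := by rw [← hp, Equiv.symm_apply_apply]
  rw [h, Perm.decomposeFin_symm_apply_zero]

noncomputable def fix0Equiv (n : ℕ) :
    {e : Perm (Fin (n+1)) // e * e = 1 ∧ e 0 = 0} ≃ {f : Perm (Fin n) // f * f = 1} where
  toFun e := ⟨(Perm.decomposeFin e.1).2, by
    obtain ⟨e, he, h0⟩ := e
    have hrep : e = Perm.decomposeFin.symm (0, (Perm.decomposeFin e).2) := by
      conv_lhs => rw [← Perm.decomposeFin.symm_apply_apply e]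
      have : Perm.decomposeFin e = (0, (Perm.decomposeFin e).2) := by
        rw [Prod.ext_iff]; exact ⟨by rw [decomposeFin_fst, h0], rfl⟩
      rw [this]
    rw [hrep] at he
    exact (char0 _).1 he⟩
  invFun f := ⟨Perm.decomposeFin.symm (0, f.1), (char0 f.1).2 f.2,
    Perm.decomposeFin_symm_apply_zero 0 f.1⟩
  left_inv := by
    rintro ⟨e, he, h0⟩
    apply Subtype.ext
    show Perm.decomposeFin.symm (0, (Perm.decomposeFin e).2) = e
    conv_rhs => rw [← Perm.decomposeFin.symm_apply_apply e]
    congr 1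
    rw [Prod.ext_iff]; exact ⟨by rw [decomposeFin_fst, h0], rfl⟩
  right_inv := by
    rintro ⟨f, hf⟩
    apply Subtype.ext
    show (Perm.decomposeFin (Perm.decomposeFin.symm (0, f))).2 = f
    rw [Equiv.apply_symm_apply]

def conjEquiv {n : ℕ} (q : Fin (n+1)) :
    {e : Perm (Fin (n+1)) // e * e = 1 ∧ e q = q} ≃
      {e : Perm (Fin (n+1)) // e * e = 1 ∧ e 0 = 0} where
  toFun e := ⟨swap 0 q * e.1 * swap 0 q, by
    obtain ⟨e, he, hq⟩ := e
    constructor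
    · have : swap 0 q * e * swap 0 q * (swap 0 q * e * swap 0 q)
          = swap 0 q * (e * e) * swap 0 q := by
        group
        simp [mul_assoc]
      rw [this, he]; simp
    · simp [Perm.mul_apply, swap_apply_left, hq, swap_apply_right]⟩
  invFun e := ⟨swap 0 q * e.1 * swap 0 q, by
    obtain ⟨e, he, h0⟩ := e
    constructor
    · have : swap 0 q * e * swap 0 q * (swap 0 q * e * swap 0 q)
          = swap 0 q * (e * e) * swap 0 q := by
        group
        simp [mul_assoc]
      rw [this, he]; simp
    · simp [Perm.mul_apply, swap_apply_right, h0, swap_apply_left]⟩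
  left_inv := by
    rintro ⟨e, he, hq⟩
    apply Subtype.ext
    show swap 0 q * (swap 0 q * e * swap 0 q) * swap 0 q = e
    group
    simp [mul_assoc]
  right_inv := by
    rintro ⟨e, he, h0⟩
    apply Subtype.ext
    show swap 0 q * (swap 0 q * e * swap 0 q) * swap 0 q = e
    group
    simp [mul_assoc]

lemma involutions_rec (n : ℕ) :
    involutions (n+2) = involutions (n+1) + (n+1) * involutions n := by
  classical
  have E : {σ : Perm (Fin (n+2)) // σ * σ = 1} ≃
      Σ p : Fin (n+2), {e : Perm (Fin (n+1)) //
        Perm.decomposeFin.symm (p, e) * Perm.decomposeFin.symm (p, e) = 1} := by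
    refine (Perm.decomposeFin.subtypeEquiv fun σ => ?_).trans
      (Equiv.subtypeProdEquivSigmaSubtype fun p e =>
        Perm.decomposeFin.symm (p, e) * Perm.decomposeFin.symm (p, e) = 1)
    constructor
    · intro h; rw [Equiv.symm_apply_apply]; exact h
    · intro h; rw [Equiv.symm_apply_apply] at h; exact h
  rw [involutions, Nat.card_congr E, Nat.card_eq_fintype_card, Fintype.card_sigma,
    Fin.sum_univ_succ]
  have h0 : Fintype.card {e : Perm (Fin (n+1)) //
      Perm.decomposeFin.symm (0, e) * Perm.decomposeFin.symm (0, e) = 1}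
      = involutions (n+1) := by
    rw [involutions, Nat.card_eq_fintype_card]
    exact Fintype.card_congr (Equiv.subtypeEquivRight fun e => char0 e)
  have hs : ∀ q : Fin (n+1), Fintype.card {e : Perm (Fin (n+1)) //
      Perm.decomposeFin.symm (q.succ, e) * Perm.decomposeFin.symm (q.succ, e) = 1}
      = involutions n := by
    intro q
    rw [involutions, Nat.card_eq_fintype_card]
    exact Fintype.card_congr
      (((Equiv.subtypeEquivRight fun e => charS q e).trans (conjEquiv q)).trans (fix0Equiv n))
  rw [h0]
  simp only [hs]
  simp [Finset.sum_const, mul_comm]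

lemma perj (j : ℕ) :
    ∑ r ∈ Finset.range (j+1), stirling (j+1) (r+1) * involutions r
      = ∑ s ∈ Finset.range (j+1), stirling j s * involutions (s+1) := by
  have h1 : ∀ r ∈ Finset.range (j+1), stirling (j+1) (r+1) * involutions r
      = (r+1) * stirling j (r+1) * involutions r + stirling j r * involutions r :=
    fun r _ => by rw [stirling_succ]; ring
  rw [Finset.sum_congr rfl h1, Finset.sum_add_distrib]
  rw [Finset.sum_range_succ (fun r => (r+1) * stirling j (r+1) * involutions r) j,
      stirling_eq_zero j (j+1) (by omega)]
  rw [Finset.sum_range_succ' (fun r => stirling j r * involutions r) j]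
  rw [Finset.sum_range_succ' (fun s => stirling j s * involutions (s+1)) j]
  have h2 : ∀ t ∈ Finset.range j, stirling j (t+1) * involutions (t+1+1)
      = stirling j (t+1) * involutions (t+1) + (t+1) * stirling j (t+1) * involutions t :=
    fun t _ => by rw [involutions_rec]; ring
  rw [Finset.sum_congr rfl h2, Finset.sum_add_distrib, involutions_one, involutions_zero]
  ring

theorem stmt9 (k : ℕ) :
    ∑ j ∈ Finset.range (k + 1), k.choose j *
        (∑ r ∈ Finset.range (j + 1), stirling (j + 1) (r + 1) * involutions r) =
    ∑ r ∈ Finset.range (k + 2), stirling (k + 1) r * involutions r := by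
  have step1 : ∀ j ∈ Finset.range (k+1),
      k.choose j * (∑ r ∈ Finset.range (j + 1), stirling (j + 1) (r + 1) * involutions r)
      = ∑ s ∈ Finset.range (k+1), k.choose j * (stirling j s * involutions (s+1)) := by
    intro j hj
    rw [perj, Finset.mul_sum]
    apply Finset.sum_subset
    · intro s hs
      simp only [Finset.mem_range] at *
      omega
    · intro s _ hs
      simp only [Finset.mem_range] at hs
      rw [stirling_eq_zero j s (by omega)]
      ring
  rw [Finset.sum_congr rfl step1, Finset.sum_comm]
  have step2 : ∀ s ∈ Finset.range (k+1),
      ∑ j ∈ Finset.range (k+1), k.choose j * (stirling j s * involutions (s+1))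
      = stirling (k+1) (s+1) * involutions (s+1) := by
    intro s _
    rw [stirling_binom, Finset.sum_mul]
    exact Finset.sum_congr rfl fun j _ => by ring
  rw [Finset.sum_congr rfl step2,
    Finset.sum_range_succ' (fun r => stirling (k+1) r * involutions r) (k+1),
    stirling_zero]
  simp
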